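/- Strong duality and primal recovery hold: if (ω*, γ*) is an optimal solution of the dual subproblem, then the pair (d*, z*) with d* = −W(Gω* + γ*) and z* = max_{j ∈ {1,…,m}} (b_j + g_jᵀd*) is an optimal solution of the primal subproblem, and the optimal value of the primal subproblem equals the optimal value of the dual subproblem. -/

import Mathlib

open Matrix

/-- Objective of the dual subproblem. -/
noncomputable def dualObj (n m : ℕ) (G : Matrix (Fin n) (Fin m) ℝ) (b : Fin m → ℝ)
    (W : Matrix (Fin n) (Fin n) ℝ) (δ : ℝ) (ω : Fin m → ℝ) (γ : Fin n → ℝ) : ℝ :=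
  -(1 / 2) * ((G *ᵥ ω + γ) ⬝ᵥ W *ᵥ (G *ᵥ ω + γ)) + b ⬝ᵥ ω - δ * ∑ i, |γ i|

/-- Feasibility for the dual subproblem: `𝟙ᵀω = 1` and `ω ≥ 0`. -/
def dualFeas (m : ℕ) (ω : Fin m → ℝ) : Prop :=
  ∑ j, ω j = 1 ∧ ∀ j, 0 ≤ ω j

/-- Feasibility for the primal subproblem: `‖d‖_∞ ≤ δ` and `b_j + g_jᵀd ≤ z` for all `j`. -/
def primalFeas (n m : ℕ) (G : Matrix (Fin n) (Fin m) ℝ) (b : Fin m → ℝ) (δ : ℝ)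
    (d : Fin n → ℝ) (z : ℝ) : Prop :=
  (∀ i, |d i| ≤ δ) ∧ ∀ j, b j + (fun i => G i j) ⬝ᵥ d ≤ z

/-- Objective of the primal subproblem. -/
noncomputable def primalObj (n : ℕ) (H : Matrix (Fin n) (Fin n) ℝ)
    (d : Fin n → ℝ) (z : ℝ) : ℝ :=
  z + (1 / 2) * (d ⬝ᵥ H *ᵥ d)

/-! Weak duality is the Fenchel–Young inequality `½ dᵀHd + dᵀu ≥ -½ uᵀWu` combined with
`bᵀω + dᵀGω ≤ z` (a convex combination of the constraints) and `dᵀγ ≤ δ‖γ‖₁` (Hölder).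
Conversely, testing dual optimality of `(ω*, γ*)` along feasible directions (moving `ω*` towards
a vertex `e_j`, shrinking `γ*`, moving one coordinate of `γ*`) gives the first-order conditions
`b_j + g_jᵀd* ≤ bᵀω* + d*ᵀGω*`, `δ‖γ*‖₁ ≤ d*ᵀγ*` and `|d*_i| ≤ δ`. These make `(d*, z*)` primal
feasible with primal value at most the dual value, and weak duality closes the gap. -/

open Set Filter Topology

lemma nonpos_of_forall_mem_Ioc_mul_le_sq_mul {a K ε : ℝ} (hε : 0 < ε)
    (h : ∀ t ∈ Ioc 0 ε, t * a ≤ t ^ 2 * K) : a ≤ 0 := by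
  have hlim : Tendsto (fun t : ℝ => t * K) (𝓝[>] 0) (𝓝 0) := by
    have h0 := (continuous_mul_const K).tendsto 0
    rw [zero_mul] at h0
    exact h0.mono_left nhdsWithin_le_nhds
  refine ge_of_tendsto hlim ?_
  filter_upwards [Ioc_mem_nhdsGT hε] with t ht
  have : t * a ≤ t * (t * K) := by linarith [h t ht]
  exact le_of_mul_le_mul_left this ht.1

namespace Matrix

variable {ι R : Type*} [Fintype ι]

lemma IsSymm.dotProduct_mulVec_comm [CommSemiring R] {A : Matrix ι ι R} (hA : A.IsSymm)
    (u v : ι → R) : u ⬝ᵥ A *ᵥ v = v ⬝ᵥ A *ᵥ u := by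
  rw [dotProduct_mulVec, ← mulVec_transpose, hA.eq, dotProduct_comm]

lemma IsSymm.dotProduct_mulVec_add_smul [CommRing R] {A : Matrix ι ι R} (hA : A.IsSymm)
    (v w : ι → R) (t : R) :
    (v + t • w) ⬝ᵥ A *ᵥ (v + t • w) =
      v ⬝ᵥ A *ᵥ v + 2 * t * (w ⬝ᵥ A *ᵥ v) + t ^ 2 * (w ⬝ᵥ A *ᵥ w) := by
  simp only [mulVec_add, mulVec_smul, dotProduct_add, add_dotProduct, dotProduct_smul,
    smul_dotProduct, smul_eq_mul, hA.dotProduct_mulVec_comm v w]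
  ring

lemma IsSymm.le_dotProduct_mulVec_of_forall_mem_Ioc {A : Matrix ι ι ℝ} (hA : A.IsSymm)
    {v w : ι → ℝ} {c ε : ℝ} (hε : 0 < ε)
    (h : ∀ t ∈ Ioc 0 ε,
      t * c - (1 / 2) * ((v + t • w) ⬝ᵥ A *ᵥ (v + t • w)) ≤ -(1 / 2) * (v ⬝ᵥ A *ᵥ v)) :
    c ≤ w ⬝ᵥ A *ᵥ v := by
  suffices c - w ⬝ᵥ A *ᵥ v ≤ 0 by linarith
  refine nonpos_of_forall_mem_Ioc_mul_le_sq_mul (K := (1 / 2) * (w ⬝ᵥ A *ᵥ w)) hε fun t ht => ?_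
  have := h t ht
  rw [hA.dotProduct_mulVec_add_smul] at this
  linarith

lemma dotProduct_mulVec_mulVec_of_mul_eq_one [DecidableEq ι] [CommRing R] {H W : Matrix ι ι R}
    (hHW : H * W = 1) (v : ι → R) : (W *ᵥ v) ⬝ᵥ H *ᵥ (W *ᵥ v) = v ⬝ᵥ W *ᵥ v := by
  rw [mulVec_mulVec, hHW, one_mulVec, dotProduct_comm]

lemma PosSemidef.neg_half_dotProduct_mulVec_le [DecidableEq ι] {H W : Matrix ι ι ℝ}
    (hH : H.PosSemidef) (hHW : H * W = 1) (d u : ι → ℝ) :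
    -(1 / 2) * (u ⬝ᵥ W *ᵥ u) ≤ d ⬝ᵥ u + (1 / 2) * (d ⬝ᵥ H *ᵥ d) := by
  have hHsymm : H.IsSymm := isHermitian_iff_isSymm.mp hH.isHermitian
  have hsq : 0 ≤ (d + W *ᵥ u) ⬝ᵥ H *ᵥ (d + W *ᵥ u) := by
    simpa using hH.dotProduct_mulVec_nonneg (d + W *ᵥ u)
  have hHWu : H *ᵥ (W *ᵥ u) = u := by rw [mulVec_mulVec, hHW, one_mulVec]
  rw [mulVec_add, dotProduct_add, add_dotProduct, add_dotProduct, hHWu,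
    hHsymm.dotProduct_mulVec_comm (W *ᵥ u) d, hHWu, dotProduct_comm (W *ᵥ u) u] at hsq
  linarith

end Matrix

lemma dotProduct_le_of_mem_stdSimplex {ι : Type*} [Fintype ι] {c ω : ι → ℝ} {z : ℝ}
    (hω : ω ∈ stdSimplex ℝ ι) (hc : ∀ j, c j ≤ z) : c ⬝ᵥ ω ≤ z :=
  calc c ⬝ᵥ ω = ∑ j, ω j * c j := by simp only [dotProduct, mul_comm]
    _ ≤ ∑ j, ω j * z := Finset.sum_le_sum fun j _ => mul_le_mul_of_nonneg_left (hc j) (hω.1 j)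
    _ = z := by rw [← Finset.sum_mul, hω.2, one_mul]

lemma dotProduct_le_mul_sum_abs {ι : Type*} [Fintype ι] {d : ι → ℝ} {δ : ℝ}
    (hd : ∀ i, |d i| ≤ δ) (γ : ι → ℝ) : d ⬝ᵥ γ ≤ δ * ∑ i, |γ i| := by
  rw [dotProduct, Finset.mul_sum]
  refine Finset.sum_le_sum fun i _ => ?_
  calc d i * γ i ≤ |d i| * |γ i| := (le_abs_self _).trans (abs_mul _ _).le
    _ ≤ δ * |γ i| := mul_le_mul_of_nonneg_right (hd i) (abs_nonneg _)

lemma sum_abs_add_single_le {ι : Type*} [Fintype ι] [DecidableEq ι] (γ : ι → ℝ) (i : ι) (c : ℝ) :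
    ∑ k, |(γ + Pi.single i c : ι → ℝ) k| ≤ ∑ k, |γ k| + |c| := by
  calc ∑ k, |(γ + Pi.single i c : ι → ℝ) k| ≤ ∑ k, (|γ k| + |(Pi.single i c : ι → ℝ) k|) :=
        Finset.sum_le_sum fun k _ => abs_add_le _ _
    _ = ∑ k, |γ k| + |c| := by
        rw [Finset.sum_add_distrib]
        simp [Pi.single_apply, apply_ite]

def IsDualOptimal (n m : ℕ) (G : Matrix (Fin n) (Fin m) ℝ) (b : Fin m → ℝ)
    (W : Matrix (Fin n) (Fin n) ℝ) (δ : ℝ) (ωs : Fin m → ℝ) (γs : Fin n → ℝ) : Prop :=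
  dualFeas m ωs ∧ ∀ (ω : Fin m → ℝ) (γ : Fin n → ℝ), dualFeas m ω →
    dualObj n m G b W δ ω γ ≤ dualObj n m G b W δ ωs γs

section Subproblem

variable {n m : ℕ} {G : Matrix (Fin n) (Fin m) ℝ} {b : Fin m → ℝ}
  {H W : Matrix (Fin n) (Fin n) ℝ} {δ : ℝ}

lemma dualFeas_iff_mem_stdSimplex {ω : Fin m → ℝ} : dualFeas m ω ↔ ω ∈ stdSimplex ℝ (Fin m) :=
  and_comm

lemma dualObj_le_primalObj (hH : H.PosSemidef) (hHW : H * W = 1) {ω : Fin m → ℝ}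
    (hω : dualFeas m ω) (γ : Fin n → ℝ) {d : Fin n → ℝ} {z : ℝ}
    (hdz : primalFeas n m G b δ d z) : dualObj n m G b W δ ω γ ≤ primalObj n H d z := by
  have hlin : b ⬝ᵥ ω + d ⬝ᵥ G *ᵥ ω ≤ z := by
    rw [dotProduct_mulVec, ← add_dotProduct]
    refine dotProduct_le_of_mem_stdSimplex (dualFeas_iff_mem_stdSimplex.mp hω) fun j => ?_
    simpa only [Pi.add_apply, vecMul, dotProduct_comm d] using hdz.2 j
  have hholder := dotProduct_le_mul_sum_abs hdz.1 γ
  have hfenchel := hH.neg_half_dotProduct_mulVec_le hHW d (G *ᵥ ω + γ)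
  rw [dotProduct_add] at hfenchel
  simp only [dualObj, primalObj]
  linarith

namespace IsDualOptimal

variable {ωs : Fin m → ℝ} {γs : Fin n → ℝ}

/-- First-order optimality along a feasible direction `(α, β)` in which the `ℓ¹` term grows at
most at rate `s`. -/
lemma sub_le_dotProduct_mulVec (h : IsDualOptimal n m G b W δ ωs γs) (hW : W.IsSymm)
    (hδ : 0 ≤ δ) {α : Fin m → ℝ} {β : Fin n → ℝ} {s ε : ℝ} (hε : 0 < ε)
    (hα : ∀ t ∈ Ioc 0 ε, dualFeas m (ωs + t • α))
    (hβ : ∀ t ∈ Ioc 0 ε, ∑ i, |(γs + t • β) i| ≤ ∑ i, |γs i| + t * s) :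
    b ⬝ᵥ α - δ * s ≤ (G *ᵥ α + β) ⬝ᵥ W *ᵥ (G *ᵥ ωs + γs) := by
  refine hW.le_dotProduct_mulVec_of_forall_mem_Ioc hε fun t ht => ?_
  have hval := h.2 _ (γs + t • β) (hα t ht)
  have hl1 := mul_le_mul_of_nonneg_left (hβ t ht) hδ
  have harg : G *ᵥ (ωs + t • α) + (γs + t • β) = G *ᵥ ωs + γs + t • (G *ᵥ α + β) := by
    rw [mulVec_add, mulVec_smul, smul_add]
    abel
  simp only [dualObj, harg, dotProduct_add, dotProduct_smul, smul_eq_mul] at hval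
  linarith

variable {d : Fin n → ℝ}

lemma abs_le (h : IsDualOptimal n m G b W δ ωs γs) (hW : W.IsSymm) (hδ : 0 ≤ δ)
    (hd : d = -(W *ᵥ (G *ᵥ ωs + γs))) (i : Fin n) : |d i| ≤ δ := by
  have hsigned (σ : ℝ) (hσ : |σ| = 1) : -δ ≤ σ * (W *ᵥ (G *ᵥ ωs + γs)) i := by
    have hβ (t : ℝ) (ht : t ∈ Ioc 0 1) :
        ∑ k, |(γs + t • Pi.single i σ : Fin n → ℝ) k| ≤ ∑ k, |γs k| + t * 1 := by
      rw [← Pi.single_smul]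
      simpa [abs_mul, hσ, abs_of_pos ht.1] using sum_abs_add_single_le γs i (t • σ)
    simpa [single_dotProduct] using
      h.sub_le_dotProduct_mulVec hW hδ (α := 0) one_pos (fun t _ => by simpa using h.1) hβ
  have hpos := hsigned 1 abs_one
  have hneg := hsigned (-1) (by simp)
  rw [hd, Pi.neg_apply, _root_.abs_neg, _root_.abs_le]
  constructor <;> linarith

lemma mul_sum_abs_le (h : IsDualOptimal n m G b W δ ωs γs) (hW : W.IsSymm) (hδ : 0 ≤ δ)
    (hd : d = -(W *ᵥ (G *ᵥ ωs + γs))) : δ * ∑ i, |γs i| ≤ d ⬝ᵥ γs := by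
  have hβ (t : ℝ) (ht : t ∈ Ioc 0 1) :
      ∑ i, |(γs + t • -γs) i| ≤ ∑ i, |γs i| + t * -∑ i, |γs i| := by
    have habs (i : Fin n) : |(γs + t • -γs) i| = (1 - t) * |γs i| := by
      rw [show (γs + t • -γs) i = (1 - t) * γs i by simp; ring, abs_mul,
        abs_of_nonneg (by linarith [ht.2])]
    rw [Finset.sum_congr rfl fun i _ => habs i, ← Finset.mul_sum]
    linarith
  have := h.sub_le_dotProduct_mulVec hW hδ (α := 0) one_pos (fun t _ => by simpa using h.1) hβ
  simp only [dotProduct_zero, mulVec_zero, zero_add, neg_dotProduct] at this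
  rw [hd, neg_dotProduct, dotProduct_comm]
  linarith

lemma add_dotProduct_le (h : IsDualOptimal n m G b W δ ωs γs) (hW : W.IsSymm) (hδ : 0 ≤ δ)
    (hd : d = -(W *ᵥ (G *ᵥ ωs + γs))) (j : Fin m) :
    b j + (fun i => G i j) ⬝ᵥ d ≤ b ⬝ᵥ ωs + d ⬝ᵥ G *ᵥ ωs := by
  have hα (t : ℝ) (ht : t ∈ Ioc 0 1) : dualFeas m (ωs + t • (Pi.single j 1 - ωs)) :=
    dualFeas_iff_mem_stdSimplex.mpr <| (convex_stdSimplex ℝ (Fin m)).add_smul_sub_mem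
      (dualFeas_iff_mem_stdSimplex.mp h.1) (single_mem_stdSimplex ℝ j) (Ioc_subset_Icc_self ht)
  have := h.sub_le_dotProduct_mulVec hW hδ (β := 0) (s := 0) one_pos hα (fun t _ => by simp)
  simp only [dotProduct_sub, dotProduct_single, mulVec_sub, mulVec_single_one, sub_dotProduct,
    mul_one, mul_zero, sub_zero, add_zero] at this
  rw [show G.col j = fun i => G i j from rfl] at this
  rw [hd, dotProduct_neg, neg_dotProduct, dotProduct_comm _ (G *ᵥ ωs)]
  linarith

lemma primalObj_le [NeZero m] (h : IsDualOptimal n m G b W δ ωs γs) (hW : W.IsSymm)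
    (hδ : 0 ≤ δ) (hHW : H * W = 1) (hd : d = -(W *ᵥ (G *ᵥ ωs + γs))) :
    primalObj n H d (Finset.univ.sup' Finset.univ_nonempty
      fun j : Fin m => b j + (fun i => G i j) ⬝ᵥ d) ≤ dualObj n m G b W δ ωs γs := by
  have hz := Finset.sup'_le Finset.univ_nonempty _ fun j _ => h.add_dotProduct_le hW hδ hd j
  have hγ := h.mul_sum_abs_le hW hδ hd
  have hquad : d ⬝ᵥ H *ᵥ d = (G *ᵥ ωs + γs) ⬝ᵥ W *ᵥ (G *ᵥ ωs + γs) := by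
    rw [hd, mulVec_neg, dotProduct_neg, neg_dotProduct, neg_neg,
      dotProduct_mulVec_mulVec_of_mul_eq_one hHW]
  have hlin : d ⬝ᵥ (G *ᵥ ωs + γs) = -((G *ᵥ ωs + γs) ⬝ᵥ W *ᵥ (G *ᵥ ωs + γs)) := by
    rw [hd, neg_dotProduct, dotProduct_comm]
  rw [dotProduct_add] at hlin
  simp only [primalObj, dualObj]
  linarith

end IsDualOptimal

end Subproblem

theorem stmt4_general (n m : ℕ) [NeZero m]
    (G : Matrix (Fin n) (Fin m) ℝ) (b : Fin m → ℝ)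
    (H W : Matrix (Fin n) (Fin n) ℝ) (hH : H.PosDef) (hW : W = H⁻¹)
    (δ : ℝ) (hδ : 0 < δ)
    (ωs : Fin m → ℝ) (γs : Fin n → ℝ) (hfeas : dualFeas m ωs)
    (hopt : ∀ (ω : Fin m → ℝ) (γ : Fin n → ℝ), dualFeas m ω →
      dualObj n m G b W δ ω γ ≤ dualObj n m G b W δ ωs γs)
    (dstar : Fin n → ℝ) (zstar : ℝ)
    (hds : dstar = -(W *ᵥ (G *ᵥ ωs + γs)))
    (hzs : zstar = Finset.univ.sup' Finset.univ_nonempty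
      fun j : Fin m => b j + (fun i => G i j) ⬝ᵥ dstar) :
    primalFeas n m G b δ dstar zstar ∧
    (∀ (d : Fin n → ℝ) (z : ℝ), primalFeas n m G b δ d z →
      primalObj n H dstar zstar ≤ primalObj n H d z) ∧
    primalObj n H dstar zstar = dualObj n m G b W δ ωs γs := by
  have hdual : IsDualOptimal n m G b W δ ωs γs := ⟨hfeas, hopt⟩
  have hHW : H * W = 1 := hW ▸ mul_nonsing_inv H ((isUnit_iff_isUnit_det H).mp hH.isUnit)
  have hWsymm : W.IsSymm := isHermitian_iff_isSymm.mp (hW ▸ hH.inv).isHermitian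
  have hprimal : primalFeas n m G b δ dstar zstar :=
    ⟨hdual.abs_le hWsymm hδ.le hds,
      fun j => hzs ▸ Finset.le_sup' (fun j : Fin m => b j + (fun i => G i j) ⬝ᵥ dstar)
        (Finset.mem_univ j)⟩
  have hle : primalObj n H dstar zstar ≤ dualObj n m G b W δ ωs γs :=
    hzs ▸ hdual.primalObj_le hWsymm hδ.le hHW hds
  have hweak (d : Fin n → ℝ) (z : ℝ) (hdz : primalFeas n m G b δ d z) :
      dualObj n m G b W δ ωs γs ≤ primalObj n H d z :=
    dualObj_le_primalObj hH.posSemidef hHW hfeas γs hdz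
  exact ⟨hprimal, fun d z hdz => hle.trans (hweak d z hdz), le_antisymm hle (hweak _ _ hprimal)⟩

/-- strong duality and primal recovery.  If `(ω*, γ*)` is dual optimal, then
`(d*, z*)` with `d* = −W(Gω* + γ*)` and `z* = max_j (b_j + g_jᵀd*)` is primal optimal, and
the optimal values of the primal and dual subproblems are equal. -/
theorem stmt4 (n m : ℕ) [NeZero n] [NeZero m]
    (G : Matrix (Fin n) (Fin m) ℝ) (b : Fin m → ℝ)
    (H W : Matrix (Fin n) (Fin n) ℝ) (hH : H.PosDef) (hW : W = H⁻¹)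
    (δ : ℝ) (hδ : 0 < δ)
    (ωs : Fin m → ℝ) (γs : Fin n → ℝ) (hfeas : dualFeas m ωs)
    (hopt : ∀ (ω : Fin m → ℝ) (γ : Fin n → ℝ), dualFeas m ω →
      dualObj n m G b W δ ω γ ≤ dualObj n m G b W δ ωs γs)
    (dstar : Fin n → ℝ) (zstar : ℝ)
    (hds : dstar = -(W *ᵥ (G *ᵥ ωs + γs)))
    (hzs : zstar = Finset.univ.sup' Finset.univ_nonempty
      fun j : Fin m => b j + (fun i => G i j) ⬝ᵥ dstar) :
    primalFeas n m G b δ dstar zstar ∧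
    (∀ (d : Fin n → ℝ) (z : ℝ), primalFeas n m G b δ d z →
      primalObj n H dstar zstar ≤ primalObj n H d z) ∧
    primalObj n H dstar zstar = dualObj n m G b W δ ωs γs :=
  stmt4_general n m G b H W hH hW δ hδ ωs γs hfeas hopt dstar zstar hds hzs
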